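/- arXiv:2304.08020 — 4 statements merged into one kernel-verified Lean document; each statement's English description precedes it below -/
import Mathlib

section
/- Under the one-way random effect model, the ANOVA-type estimator Σ̃_b = n_0^{-1} { Σ_{i=1}^m n_i (m-1)^{-1} (Ȳ_{i·} - Ȳ_{··})(Ȳ_{i·} - Ȳ_{··})^T - Σ̂_ε }, with n_0 = (N - N^{-1} Σ_i n_i²)/(m-1) and Ȳ_{··} = N^{-1} Σ_{i,j} Y_{ij}, is an unbiased estimator of Σ_b: E[Σ̃_b] = Σ_b. -/
open MeasureTheory ProbabilityTheory Finset

/-!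
Every quantity in the estimator is a linear combination of the vectors `b i` and `ε i j`,
which are pairwise orthogonal in `L²`: `E[X_a X_a'ᵀ] = δ_{aa'} C_a`. For such a family and
weights `w` with total `W`, `E[∑ w_a (X_a - X̄_w)(X_a - X̄_w)ᵀ] = ∑ w_a C_a - W⁻¹ ∑ w_a² C_a`.
With unit weights on the errors of one subject this makes `Σ̂_ε` unbiased. The subject means
`Ȳ_i = b_i + ε̄_i` are again orthogonal, with second moments `Σ_b + Σ_ε / n_i`; with weights
`n_i` the same formula gives `E[∑ n_i (Ȳ_i - Ȳ)(Ȳ_i - Ȳ)ᵀ] = (N - N⁻¹ ∑ n_i²) Σ_b + (m - 1) Σ_ε`,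
that is `(m - 1) (n₀ Σ_b + Σ_ε)`.
-/

theorem Finset.sum_weighted_deviation_mul_deviation {ι : Type*} (s : Finset ι) (w x y : ι → ℝ)
    (hw : ∑ a ∈ s, w a ≠ 0) :
    ∑ a ∈ s, w a * ((x a - (∑ b ∈ s, w b)⁻¹ * ∑ b ∈ s, w b * x b) *
        (y a - (∑ b ∈ s, w b)⁻¹ * ∑ b ∈ s, w b * y b)) =
      ∑ a ∈ s, w a * (x a * y a) -
        (∑ a ∈ s, w a)⁻¹ * ((∑ a ∈ s, w a * x a) * ∑ a ∈ s, w a * y a) := by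
  set W := ∑ a ∈ s, w a
  set Sx := ∑ a ∈ s, w a * x a
  set Sy := ∑ a ∈ s, w a * y a
  have expand : ∀ a, w a * ((x a - W⁻¹ * Sx) * (y a - W⁻¹ * Sy)) =
      w a * (x a * y a) - W⁻¹ * Sy * (w a * x a) - W⁻¹ * Sx * (w a * y a) +
        W⁻¹ * Sx * W⁻¹ * Sy * w a := fun a => by ring
  simp only [expand, sum_add_distrib, sum_sub_distrib, ← mul_sum]
  field_simp
  ring

theorem Finset.sum_mul_add_inv_mul_sub {ι : Type*} [Fintype ι] (n : ι → ℝ)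
    (hn : ∀ i, n i ≠ 0) (hN : ∑ i, n i ≠ 0) (u v : ℝ) :
    ∑ i, n i * (u + (n i)⁻¹ * v) - (∑ i, n i)⁻¹ * ∑ i, n i ^ 2 * (u + (n i)⁻¹ * v) =
      (∑ i, n i - (∑ i, n i)⁻¹ * ∑ i, n i ^ 2) * u + ((Fintype.card ι : ℝ) - 1) * v := by
  have h1 i : n i * (u + (n i)⁻¹ * v) = n i * u + v := by
    rw [mul_add, mul_inv_cancel_left₀ (hn i)]
  have h2 i : n i ^ 2 * (u + (n i)⁻¹ * v) = n i ^ 2 * u + n i * v := by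
    rw [sq, mul_assoc, h1]
    ring
  simp only [h1, h2, sum_add_distrib, ← sum_mul, sum_const, card_univ, nsmul_eq_mul]
  field_simp
  ring

section

variable {Ω ι ι' κ : Type*}

section SubjectMeans

variable {n : ι → ℕ} {b : ι → Ω → κ → ℝ} {ε : (i : ι) → Fin (n i) → Ω → κ → ℝ}
  {Y : (i : ι) → Fin (n i) → Ω → κ → ℝ} {Ybar : ι → Ω → κ → ℝ}

theorem subjectMean_eq (hn : ∀ i, n i ≠ 0) (hY : ∀ i j ω k, Y i j ω k = b i ω k + ε i j ω k)
    (hYbar : ∀ i ω k, Ybar i ω k = (n i : ℝ)⁻¹ * ∑ j, Y i j ω k) :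
    Ybar = fun i ω k => b i ω k + (n i : ℝ)⁻¹ * ∑ j, ε i j ω k := by
  ext i ω k
  have : (n i : ℝ) ≠ 0 := by exact_mod_cast hn i
  simp [hYbar, hY, sum_add_distrib, mul_add, this]

theorem sub_subjectMean_eq (hn : ∀ i, n i ≠ 0) (hY : ∀ i j ω k, Y i j ω k = b i ω k + ε i j ω k)
    (hYbar : ∀ i ω k, Ybar i ω k = (n i : ℝ)⁻¹ * ∑ j, Y i j ω k) (i : ι) (j : Fin (n i))
    (ω : Ω) (k : κ) :
    Y i j ω k - Ybar i ω k = ε i j ω k - (n i : ℝ)⁻¹ * ∑ j', ε i j' ω k := by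
  simp [hY, subjectMean_eq hn hY hYbar]

theorem grandMean_eq [Fintype ι] {Ygrand : Ω → κ → ℝ} (hn : ∀ i, n i ≠ 0)
    (hYbar : ∀ i ω k, Ybar i ω k = (n i : ℝ)⁻¹ * ∑ j, Y i j ω k)
    (hYgrand : ∀ ω k, Ygrand ω k = (∑ i, (n i : ℝ))⁻¹ * ∑ i, ∑ j, Y i j ω k) (ω : Ω) (k : κ) :
    Ygrand ω k = (∑ i, (n i : ℝ))⁻¹ * ∑ i, (n i : ℝ) * Ybar i ω k := by
  have hn' i : (n i : ℝ) ≠ 0 := by exact_mod_cast hn i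
  simp [hYgrand, hYbar, hn']

end SubjectMeans

variable [MeasurableSpace Ω] {μ : Measure Ω}

structure HasOrthogonalSecondMoments (μ : Measure Ω) (X : ι → Ω → κ → ℝ) (C : ι → κ → κ → ℝ) :
    Prop where
  memLp : ∀ a k, MemLp (fun ω => X a ω k) 2 μ
  integral_mul_self : ∀ a k l, ∫ ω, X a ω k * X a ω l ∂μ = C a k l
  integral_mul_of_ne : ∀ a a', a ≠ a' → ∀ k l, ∫ ω, X a ω k * X a' ω l ∂μ = 0

namespace HasOrthogonalSecondMoments

variable {X : ι → Ω → κ → ℝ} {C : ι → κ → κ → ℝ}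

theorem of_iIndepFun (hX : iIndepFun X μ) (hL2 : ∀ a k, MemLp (fun ω => X a ω k) 2 μ)
    (hmean : ∀ a k, ∫ ω, X a ω k ∂μ = 0) (hcov : ∀ a k l, ∫ ω, X a ω k * X a ω l ∂μ = C a k l) :
    HasOrthogonalSecondMoments μ X C where
  memLp := hL2
  integral_mul_self := hcov
  integral_mul_of_ne a a' hne k l := by
    have hkl := (hX.indepFun hne).comp (measurable_pi_apply k) (measurable_pi_apply l)
    simpa [hmean] using hkl.integral_fun_mul_eq_mul_integral (hL2 a k).1 (hL2 a' l).1

theorem comp (h : HasOrthogonalSecondMoments μ X C) {f : ι' → ι} (hf : Function.Injective f) :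
    HasOrthogonalSecondMoments μ (fun b => X (f b)) (fun b => C (f b)) where
  memLp b := h.memLp (f b)
  integral_mul_self b := h.integral_mul_self (f b)
  integral_mul_of_ne _ _ hne := h.integral_mul_of_ne _ _ (hf.ne hne)

theorem integrable_mul (h : HasOrthogonalSecondMoments μ X C) (a a' : ι) (k l : κ) :
    Integrable (fun ω => X a ω k * X a' ω l) μ :=
  (h.memLp a k).integrable_mul (h.memLp a' l)

theorem subjectErrors {n : ι → ℕ} {b : ι → Ω → κ → ℝ}
    {ε : (i : ι) → Fin (n i) → Ω → κ → ℝ} {Sb Se : κ → κ → ℝ}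
    (h : HasOrthogonalSecondMoments μ (Sum.elim b fun x : (i : ι) × Fin (n i) => ε x.1 x.2)
      (Sum.elim (fun _ => Sb) fun _ => Se)) (i : ι) :
    HasOrthogonalSecondMoments μ (ε i) fun _ => Se :=
  h.comp (f := Sum.inr ∘ Sigma.mk i) (Sum.inr_injective.comp sigma_mk_injective)

variable [Fintype ι]

theorem memLp_sum (h : HasOrthogonalSecondMoments μ X C) (c : ι → ℝ) (k : κ) :
    MemLp (fun ω => ∑ a, c a * X a ω k) 2 μ :=
  memLp_finsetSum _ fun a _ => (h.memLp a k).const_mul (c a)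

theorem integral_sum_mul_sum (h : HasOrthogonalSecondMoments μ X C) (c d : ι → ℝ) (k l : κ) :
    ∫ ω, (∑ a, c a * X a ω k) * (∑ a, d a * X a ω l) ∂μ = ∑ a, c a * d a * C a k l := by
  have hint a a' : Integrable (fun ω => c a * d a' * (X a ω k * X a' ω l)) μ :=
    (h.integrable_mul a a' k l).const_mul _
  have expand ω : (∑ a, c a * X a ω k) * (∑ a, d a * X a ω l) =
      ∑ a, ∑ a', c a * d a' * (X a ω k * X a' ω l) := by
    simp only [sum_mul_sum, mul_mul_mul_comm]
  simp only [expand]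
  rw [integral_finsetSum _ fun a _ => integrable_finsetSum _ fun a' _ => hint a a']
  refine sum_congr rfl fun a _ => ?_
  rw [integral_finsetSum _ fun a' _ => hint a a', sum_eq_single a, integral_const_mul,
    h.integral_mul_self]
  · intro a' _ hne
    rw [integral_const_mul, h.integral_mul_of_ne a a' (Ne.symm hne), mul_zero]
  · simp

theorem linearCombination (h : HasOrthogonalSecondMoments μ X C) (c : ι' → ι → ℝ)
    {D : ι' → κ → κ → ℝ} (hdiag : ∀ i k l, ∑ a, c i a * c i a * C a k l = D i k l)
    (hoff : ∀ i i', i ≠ i' → ∀ k l, ∑ a, c i a * c i' a * C a k l = 0) :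
    HasOrthogonalSecondMoments μ (fun i ω k => ∑ a, c i a * X a ω k) D where
  memLp i := h.memLp_sum (c i)
  integral_mul_self i k l := (h.integral_sum_mul_sum _ _ k l).trans (hdiag i k l)
  integral_mul_of_ne i i' hne k l := (h.integral_sum_mul_sum _ _ k l).trans (hoff i i' hne k l)

theorem integral_sum_weighted_deviation (h : HasOrthogonalSecondMoments μ X C) (w : ι → ℝ)
    (hw : ∑ a, w a ≠ 0) (k l : κ) :
    ∫ ω, ∑ a, w a * ((X a ω k - (∑ b, w b)⁻¹ * ∑ b, w b * X b ω k) *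
        (X a ω l - (∑ b, w b)⁻¹ * ∑ b, w b * X b ω l)) ∂μ =
      ∑ a, w a * C a k l - (∑ a, w a)⁻¹ * ∑ a, w a ^ 2 * C a k l := by
  have hdiag a : Integrable (fun ω => w a * (X a ω k * X a ω l)) μ :=
    (h.integrable_mul a a k l).const_mul _
  have hmean : Integrable (fun ω => (∑ a, w a)⁻¹ *
      ((∑ a, w a * X a ω k) * ∑ a, w a * X a ω l)) μ :=
    ((h.memLp_sum w k).integrable_mul (h.memLp_sum w l)).const_mul _
  simp only [sum_weighted_deviation_mul_deviation _ w _ _ hw]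
  rw [integral_sub (integrable_finsetSum _ fun a _ => hdiag a) hmean,
    integral_finsetSum _ fun a _ => hdiag a, integral_const_mul, h.integral_sum_mul_sum]
  simp only [integral_const_mul, h.integral_mul_self, sq]

theorem integrable_sum_weighted_deviation (h : HasOrthogonalSecondMoments μ X C) (w : ι → ℝ)
    (k l : κ) :
    Integrable (fun ω => ∑ a, w a * ((X a ω k - (∑ b, w b)⁻¹ * ∑ b, w b * X b ω k) *
        (X a ω l - (∑ b, w b)⁻¹ * ∑ b, w b * X b ω l))) μ :=
  integrable_finsetSum _ fun a _ =>
    (((h.memLp a k).sub ((h.memLp_sum w k).const_mul _)).integrable_mul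
      ((h.memLp a l).sub ((h.memLp_sum w l).const_mul _))).const_mul _

theorem integrable_sum_deviation (h : HasOrthogonalSecondMoments μ X C) (k l : κ) :
    Integrable (fun ω => ∑ a, (X a ω k - (Fintype.card ι : ℝ)⁻¹ * ∑ b, X b ω k) *
        (X a ω l - (Fintype.card ι : ℝ)⁻¹ * ∑ b, X b ω l)) μ := by
  simpa using h.integrable_sum_weighted_deviation 1 k l

theorem integral_sum_deviation [Nonempty ι] {S : κ → κ → ℝ}
    (h : HasOrthogonalSecondMoments μ X fun _ => S) (k l : κ) :
    ∫ ω, ∑ a, (X a ω k - (Fintype.card ι : ℝ)⁻¹ * ∑ b, X b ω k) *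
        (X a ω l - (Fintype.card ι : ℝ)⁻¹ * ∑ b, X b ω l) ∂μ =
      ((Fintype.card ι : ℝ) - 1) * S k l := by
  have hcard : (Fintype.card ι : ℝ) ≠ 0 := by positivity
  have := h.integral_sum_weighted_deviation 1 (by simp [hcard]) k l
  simp only [Pi.one_apply, one_mul, sum_const, card_univ, nsmul_eq_mul, mul_one, one_pow] at this
  rw [this]
  field_simp

theorem groupMean {n : ι → ℕ} (hn : ∀ i, n i ≠ 0) {b : ι → Ω → κ → ℝ}
    {ε : (i : ι) → Fin (n i) → Ω → κ → ℝ} {Sb Se : κ → κ → ℝ}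
    (h : HasOrthogonalSecondMoments μ (Sum.elim b fun x : (i : ι) × Fin (n i) => ε x.1 x.2)
      (Sum.elim (fun _ => Sb) fun _ => Se)) :
    HasOrthogonalSecondMoments μ (fun i ω k => b i ω k + (n i : ℝ)⁻¹ * ∑ j, ε i j ω k)
      (fun i k l => Sb k l + (n i : ℝ)⁻¹ * Se k l) := by
  classical
  let c : ι → ι ⊕ (i : ι) × Fin (n i) → ℝ := fun i =>
    Sum.elim (Pi.single i 1) fun x => if x.1 = i then (n i : ℝ)⁻¹ else 0
  have hc : (fun i ω k => b i ω k + (n i : ℝ)⁻¹ * ∑ j, ε i j ω k) =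
      fun i ω k => ∑ a, c i a * Sum.elim b (fun x : (i : ι) × Fin (n i) => ε x.1 x.2) a ω k := by
    ext i ω k
    simp [c, Fintype.sum_sum_type, Fintype.sum_sigma, Pi.single_apply, ite_mul, mul_sum]
  rw [hc]
  refine h.linearCombination c (fun i k l => ?_) (fun i i' hne k l => ?_)
  · have : (n i : ℝ) ≠ 0 := by exact_mod_cast hn i
    simp only [c, Fintype.sum_sum_type, Fintype.sum_sigma, Sum.elim_inl, Sum.elim_inr,
      Pi.single_apply, mul_ite, ite_mul, mul_one, one_mul, mul_zero, zero_mul, sum_ite_eq',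
      sum_ite_irrel, mem_univ, ↓reduceIte, sum_const_zero, sum_const, card_univ,
      Fintype.card_fin, nsmul_eq_mul, add_right_inj]
    field_simp
  · simp [c, Fintype.sum_sum_type, Fintype.sum_sigma, Pi.single_apply, Ne.symm hne]

section OneWayRandomEffects

variable {n : ι → ℕ} {b : ι → Ω → κ → ℝ} {ε : (i : ι) → Fin (n i) → Ω → κ → ℝ}
  {Sb Se : κ → κ → ℝ} {Y : (i : ι) → Fin (n i) → Ω → κ → ℝ} {Ybar : ι → Ω → κ → ℝ}
  {Ygrand : Ω → κ → ℝ} {Sehat : Ω → κ → κ → ℝ}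

theorem subjectMeans
    (h : HasOrthogonalSecondMoments μ (Sum.elim b fun x : (i : ι) × Fin (n i) => ε x.1 x.2)
      (Sum.elim (fun _ => Sb) fun _ => Se))
    (hn : ∀ i, n i ≠ 0) (hY : ∀ i j ω k, Y i j ω k = b i ω k + ε i j ω k)
    (hYbar : ∀ i ω k, Ybar i ω k = (n i : ℝ)⁻¹ * ∑ j, Y i j ω k) :
    HasOrthogonalSecondMoments μ Ybar fun i k l => Sb k l + (n i : ℝ)⁻¹ * Se k l :=
  subjectMean_eq hn hY hYbar ▸ h.groupMean hn

theorem integrable_pooled_within_covariance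
    (h : HasOrthogonalSecondMoments μ (Sum.elim b fun x : (i : ι) × Fin (n i) => ε x.1 x.2)
      (Sum.elim (fun _ => Sb) fun _ => Se))
    (hn : ∀ i, n i ≠ 0) (hY : ∀ i j ω k, Y i j ω k = b i ω k + ε i j ω k)
    (hYbar : ∀ i ω k, Ybar i ω k = (n i : ℝ)⁻¹ * ∑ j, Y i j ω k)
    (hSehat : ∀ ω k l, Sehat ω k l = ((∑ i, (n i : ℝ)) - Fintype.card ι)⁻¹ *
      ∑ i, ∑ j, (Y i j ω k - Ybar i ω k) * (Y i j ω l - Ybar i ω l)) (k l : κ) :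
    Integrable (fun ω => Sehat ω k l) μ := by
  simp only [hSehat, sub_subjectMean_eq hn hY hYbar]
  exact (integrable_finsetSum _ fun i _ => by
    simpa using ((h.subjectErrors i).integrable_sum_deviation k l)).const_mul _

theorem integral_pooled_within_covariance
    (h : HasOrthogonalSecondMoments μ (Sum.elim b fun x : (i : ι) × Fin (n i) => ε x.1 x.2)
      (Sum.elim (fun _ => Sb) fun _ => Se))
    (hn : ∀ i, n i ≠ 0) (hY : ∀ i j ω k, Y i j ω k = b i ω k + ε i j ω k)
    (hYbar : ∀ i ω k, Ybar i ω k = (n i : ℝ)⁻¹ * ∑ j, Y i j ω k)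
    (hN : (∑ i, (n i : ℝ)) - Fintype.card ι ≠ 0)
    (hSehat : ∀ ω k l, Sehat ω k l = ((∑ i, (n i : ℝ)) - Fintype.card ι)⁻¹ *
      ∑ i, ∑ j, (Y i j ω k - Ybar i ω k) * (Y i j ω l - Ybar i ω l)) (k l : κ) :
    ∫ ω, Sehat ω k l ∂μ = Se k l := by
  have hε i := h.subjectErrors i
  have : ∀ i, Nonempty (Fin (n i)) := fun i => ⟨⟨0, Nat.pos_of_ne_zero (hn i)⟩⟩
  simp only [hSehat, sub_subjectMean_eq hn hY hYbar]
  rw [integral_const_mul, integral_finsetSum _ fun i _ => by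
    simpa using ((hε i).integrable_sum_deviation k l)]
  have hwithin i := (hε i).integral_sum_deviation k l
  simp only [Fintype.card_fin] at hwithin
  rw [sum_congr rfl fun i _ => hwithin i, ← sum_mul, sum_sub_distrib, sum_const, card_univ,
    nsmul_one, inv_mul_cancel_left₀ hN]

theorem integrable_between_covariance
    (h : HasOrthogonalSecondMoments μ (Sum.elim b fun x : (i : ι) × Fin (n i) => ε x.1 x.2)
      (Sum.elim (fun _ => Sb) fun _ => Se))
    (hn : ∀ i, n i ≠ 0) (hY : ∀ i j ω k, Y i j ω k = b i ω k + ε i j ω k)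
    (hYbar : ∀ i ω k, Ybar i ω k = (n i : ℝ)⁻¹ * ∑ j, Y i j ω k)
    (hYgrand : ∀ ω k, Ygrand ω k = (∑ i, (n i : ℝ))⁻¹ * ∑ i, ∑ j, Y i j ω k) (k l : κ) :
    Integrable (fun ω => ∑ i, (n i : ℝ) / ((Fintype.card ι : ℝ) - 1) *
      ((Ybar i ω k - Ygrand ω k) * (Ybar i ω l - Ygrand ω l))) μ := by
  have := ((h.subjectMeans hn hY hYbar).integrable_sum_weighted_deviation
    (fun i => (n i : ℝ)) k l).const_mul ((Fintype.card ι : ℝ) - 1)⁻¹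
  simpa only [grandMean_eq hn hYbar hYgrand, mul_sum, div_eq_inv_mul, mul_assoc] using this

theorem integral_between_covariance
    (h : HasOrthogonalSecondMoments μ (Sum.elim b fun x : (i : ι) × Fin (n i) => ε x.1 x.2)
      (Sum.elim (fun _ => Sb) fun _ => Se))
    (hn : ∀ i, n i ≠ 0) (hY : ∀ i j ω k, Y i j ω k = b i ω k + ε i j ω k)
    (hYbar : ∀ i ω k, Ybar i ω k = (n i : ℝ)⁻¹ * ∑ j, Y i j ω k)
    (hYgrand : ∀ ω k, Ygrand ω k = (∑ i, (n i : ℝ))⁻¹ * ∑ i, ∑ j, Y i j ω k)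
    (hN : ∑ i, (n i : ℝ) ≠ 0) (hι : (Fintype.card ι : ℝ) - 1 ≠ 0) (k l : κ) :
    ∫ ω, ∑ i, (n i : ℝ) / ((Fintype.card ι : ℝ) - 1) *
        ((Ybar i ω k - Ygrand ω k) * (Ybar i ω l - Ygrand ω l)) ∂μ =
      ((∑ i, (n i : ℝ)) - (∑ i, (n i : ℝ))⁻¹ * ∑ i, (n i : ℝ) ^ 2) /
        ((Fintype.card ι : ℝ) - 1) * Sb k l + Se k l := by
  have hn' i : (n i : ℝ) ≠ 0 := by exact_mod_cast hn i
  have := (h.subjectMeans hn hY hYbar).integral_sum_weighted_deviation _ hN k l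
  rw [sum_mul_add_inv_mul_sub _ hn' hN] at this
  simp only [← grandMean_eq hn hYbar hYgrand] at this
  simp only [div_eq_inv_mul, mul_assoc, ← mul_sum, integral_const_mul, this]
  field_simp

end OneWayRandomEffects

end HasOrthogonalSecondMoments

end

theorem anova_between_subject_estimator_unbiased_general
    {Ω : Type*} [MeasurableSpace Ω] (μ : Measure Ω)
    (p m : ℕ) (n : Fin m → ℕ) (hn : ∀ i, 1 ≤ n i)
    (Sb Se : Matrix (Fin p) (Fin p) ℝ)
    (b : Fin m → Ω → Fin p → ℝ)
    (ε : (i : Fin m) → Fin (n i) → Ω → Fin p → ℝ)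
    -- mean zero and covariances
    (hb_mean : ∀ i k, ∫ ω, b i ω k ∂μ = 0)
    (hb_cov : ∀ i k l, ∫ ω, b i ω k * b i ω l ∂μ = Sb k l)
    (he_mean : ∀ i j k, ∫ ω, ε i j ω k ∂μ = 0)
    (he_cov : ∀ i j k l, ∫ ω, ε i j ω k * ε i j ω l ∂μ = Se k l)
    -- square integrability of the coordinates
    (hb_L2 : ∀ i k, MemLp (fun ω => b i ω k) 2 μ)
    (he_L2 : ∀ i j k, MemLp (fun ω => ε i j ω k) 2 μ)
    -- mutual independence of all the b's and ε's
    (hindep : iIndepFun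
      (β := fun _ : Fin m ⊕ ((i : Fin m) × Fin (n i)) => Fin p → ℝ)
      (Sum.elim b (fun x => ε x.1 x.2)) μ)
    -- the model and the subject/grand means
    (Y : (i : Fin m) → Fin (n i) → Ω → Fin p → ℝ)
    (hY : ∀ i j ω k, Y i j ω k = b i ω k + ε i j ω k)
    (Ybar : Fin m → Ω → Fin p → ℝ)
    (hYbar : ∀ i ω k, Ybar i ω k = (n i : ℝ)⁻¹ * ∑ j, Y i j ω k)
    (hNm : m < ∑ i, n i)
    (Ygrand : Ω → Fin p → ℝ)
    (hYgrand : ∀ ω k, Ygrand ω k = (∑ i, (n i : ℝ))⁻¹ * ∑ i, ∑ j, Y i j ω k)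
    (Sehat : Ω → Matrix (Fin p) (Fin p) ℝ)
    (hSehat : ∀ ω k l, Sehat ω k l =
      ((∑ i, (n i : ℝ)) - (m : ℝ))⁻¹ *
        ∑ i, ∑ j, (Y i j ω k - Ybar i ω k) * (Y i j ω l - Ybar i ω l))
    (n0 : ℝ)
    (hn0 : n0 = ((∑ i, (n i : ℝ)) - (∑ i, (n i : ℝ))⁻¹ * ∑ i, (n i : ℝ) ^ 2) / ((m : ℝ) - 1))
    (hn0ne : n0 ≠ 0) :
    ∀ k l,
      ∫ ω, n0⁻¹ *
          ((∑ i, (n i : ℝ) / ((m : ℝ) - 1) *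
              ((Ybar i ω k - Ygrand ω k) * (Ybar i ω l - Ygrand ω l)))
            - Sehat ω k l) ∂μ
        = Sb k l := by
  intro k l
  have hn' i : n i ≠ 0 := Nat.one_le_iff_ne_zero.mp (hn i)
  have hm : (Fintype.card (Fin m) : ℝ) - 1 ≠ 0 := by
    rw [Fintype.card_fin]; exact fun h => hn0ne (by rw [hn0, h, div_zero])
  have hN : ∑ i, (n i : ℝ) ≠ 0 := by
    rw [← Nat.cast_sum]; exact_mod_cast (m.zero_le.trans_lt hNm).ne'
  have hNm' : (∑ i, (n i : ℝ)) - Fintype.card (Fin m) ≠ 0 := by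
    rw [Fintype.card_fin, sub_ne_zero]; exact_mod_cast hNm.ne'
  have hSehat' : ∀ ω k l, Sehat ω k l = ((∑ i, (n i : ℝ)) - Fintype.card (Fin m))⁻¹ *
      ∑ i, ∑ j, (Y i j ω k - Ybar i ω k) * (Y i j ω l - Ybar i ω l) := by
    simpa only [Fintype.card_fin] using hSehat
  have hX : HasOrthogonalSecondMoments μ (Sum.elim b fun x : (i : Fin m) × Fin (n i) => ε x.1 x.2)
      (Sum.elim (fun _ => Sb) fun _ => Se) :=
    .of_iIndepFun hindep (by rintro (i | ⟨i, j⟩); exacts [hb_L2 i, he_L2 i j])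
      (by rintro (i | ⟨i, j⟩); exacts [hb_mean i, he_mean i j])
      (by rintro (i | ⟨i, j⟩); exacts [hb_cov i, he_cov i j])
  have hbetween := hX.integral_between_covariance hn' hY hYbar hYgrand hN hm k l
  have hbetween_int := hX.integrable_between_covariance hn' hY hYbar hYgrand k l
  simp only [Fintype.card_fin, ← hn0] at hbetween hbetween_int
  rw [integral_const_mul, integral_sub hbetween_int
    (hX.integrable_pooled_within_covariance hn' hY hYbar hSehat' k l), hbetween,
    hX.integral_pooled_within_covariance hn' hY hYbar hNm' hSehat' k l, add_sub_cancel_right,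
    inv_mul_cancel_left₀ hn0ne]

/-- The ANOVA-type estimator of Σ_b is unbiased. -/
theorem anova_between_subject_estimator_unbiased
    {Ω : Type*} [MeasurableSpace Ω] (μ : Measure Ω) [IsProbabilityMeasure μ]
    (p m : ℕ) (hm : 2 ≤ m) (n : Fin m → ℕ) (hn : ∀ i, 1 ≤ n i)
    (Sb Se : Matrix (Fin p) (Fin p) ℝ)
    (b : Fin m → Ω → Fin p → ℝ)
    (ε : (i : Fin m) → Fin (n i) → Ω → Fin p → ℝ)
    -- i.i.d. assumptions
    (hb_id : ∀ i i', IdentDistrib (b i) (b i') μ μ)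
    (he_id : ∀ i (j : Fin (n i)) i' (j' : Fin (n i')), IdentDistrib (ε i j) (ε i' j') μ μ)
    -- mean zero and covariances
    (hb_mean : ∀ i k, ∫ ω, b i ω k ∂μ = 0)
    (hb_cov : ∀ i k l, ∫ ω, b i ω k * b i ω l ∂μ = Sb k l)
    (he_mean : ∀ i j k, ∫ ω, ε i j ω k ∂μ = 0)
    (he_cov : ∀ i j k l, ∫ ω, ε i j ω k * ε i j ω l ∂μ = Se k l)
    -- square integrability of the coordinates
    (hb_L2 : ∀ i k, MemLp (fun ω => b i ω k) 2 μ)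
    (he_L2 : ∀ i j k, MemLp (fun ω => ε i j ω k) 2 μ)
    -- mutual independence of all the b's and ε's
    (hindep : iIndepFun
      (β := fun _ : Fin m ⊕ ((i : Fin m) × Fin (n i)) => Fin p → ℝ)
      (Sum.elim b (fun x => ε x.1 x.2)) μ)
    -- the model and the subject/grand means
    (Y : (i : Fin m) → Fin (n i) → Ω → Fin p → ℝ)
    (hY : ∀ i j ω k, Y i j ω k = b i ω k + ε i j ω k)
    (Ybar : Fin m → Ω → Fin p → ℝ)
    (hYbar : ∀ i ω k, Ybar i ω k = (n i : ℝ)⁻¹ * ∑ j, Y i j ω k)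
    (hNm : m < ∑ i, n i)
    (Ygrand : Ω → Fin p → ℝ)
    (hYgrand : ∀ ω k, Ygrand ω k = (∑ i, (n i : ℝ))⁻¹ * ∑ i, ∑ j, Y i j ω k)
    (Sehat : Ω → Matrix (Fin p) (Fin p) ℝ)
    (hSehat : ∀ ω k l, Sehat ω k l =
      ((∑ i, (n i : ℝ)) - (m : ℝ))⁻¹ *
        ∑ i, ∑ j, (Y i j ω k - Ybar i ω k) * (Y i j ω l - Ybar i ω l))
    (n0 : ℝ)
    (hn0 : n0 = ((∑ i, (n i : ℝ)) - (∑ i, (n i : ℝ))⁻¹ * ∑ i, (n i : ℝ) ^ 2) / ((m : ℝ) - 1))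
    (hn0ne : n0 ≠ 0) :
    ∀ k l,
      ∫ ω, n0⁻¹ *
          ((∑ i, (n i : ℝ) / ((m : ℝ) - 1) *
              ((Ybar i ω k - Ygrand ω k) * (Ybar i ω l - Ygrand ω l)))
            - Sehat ω k l) ∂μ
        = Sb k l :=
  anova_between_subject_estimator_unbiased_general μ p m n hn Sb Se b ε hb_mean hb_cov he_mean
    he_cov hb_L2 he_L2 hindep Y hY Ybar hYbar hNm Ygrand hYgrand Sehat hSehat n0 hn0 hn0ne
end

section
/- Let Σ⁰ be a symmetric p×p matrix with at most p·s nonzero entries, let B be a symmetric matrix with max_{k,ℓ} |(B - Σ⁰)_{k,ℓ}| ≤ λ, and suppose Σ⁰ ⪰ δ I_p. Define F(Δ) = (1/2)‖Δ + Σ⁰ - B‖_F² + λ|Δ + Σ⁰|_1 - [(1/2)‖Σ⁰ - B‖_F² + λ|Σ⁰|_1]. Then for every symmetric Δ with ‖Δ‖_F = 5λ(ps)^{1/2}, F(Δ) ≥ (5/2)λ² p s > 0. -/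
open Finset

/-!
Entrywise, the quadratic part of `F` grows by `½Δ² + Δ(Σ⁰ - B) ≥ ½Δ² - λ|Δ|`. On the support `S`
of `Σ⁰` the penalty drops by at most `λ|Δ|`; off it `Σ⁰ = 0` and the entry is off-diagonal (the
diagonal of `Σ⁰ ⪰ δI` is nonzero), so the penalty grows by exactly `λ|Δ|` and absorbs the cross
term. Cauchy–Schwarz over `S` then gives `F(Δ) ≥ ½‖Δ‖² - 2λ√(ps)‖Δ‖`, which is `(5/2)λ²ps` when
`‖Δ‖ = 5λ√(ps)`.
-/

theorem Finset.sum_abs_le_sqrt_card_mul_sqrt_sum_sq {α : Type*} (s : Finset α) (f : α → ℝ) :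
    ∑ i ∈ s, |f i| ≤ √(#s : ℝ) * √(∑ i ∈ s, f i ^ 2) := by
  rw [← Real.sqrt_mul (Nat.cast_nonneg _)]
  apply Real.le_sqrt_of_sq_le
  simpa only [sq_abs] using sq_sum_le_card_mul_sum_sq (s := s) (f := fun i ↦ |f i|)

theorem Matrix.PosSemidef.le_diag_of_sub_smul_one {ι : Type*} [Fintype ι] [DecidableEq ι]
    {A : Matrix ι ι ℝ} {δ : ℝ} (hA : (A - δ • (1 : Matrix ι ι ℝ)).PosSemidef) (k : ι) :
    δ ≤ A k k := by
  simpa using hA.diag_nonneg (i := k)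

/-- `F Δ = penalizedLoss λ B (Δ + Σ⁰) - penalizedLoss λ B Σ⁰`. -/
noncomputable def penalizedLoss {ι : Type*} [Fintype ι] [DecidableEq ι] (lam : ℝ)
    (B M : Matrix ι ι ℝ) : ℝ :=
  (1 / 2) * (∑ k, ∑ l, (M k l - B k l) ^ 2) + lam * (∑ k, ∑ l, if k ≠ l then |M k l| else 0)

section EntryIncrement

variable {lam a b d : ℝ}

theorem half_sq_sub_le_half_sq_add_sub_sq (h : |b - a| ≤ lam) :
    (1 / 2) * d ^ 2 - lam * |d| ≤ (1 / 2) * (d + a - b) ^ 2 - (1 / 2) * (a - b) ^ 2 := by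
  have hcross : -(lam * |d|) ≤ d * (a - b) := by
    have : |d * (a - b)| ≤ |d| * lam := by
      rw [abs_mul, abs_sub_comm]
      exact mul_le_mul_of_nonneg_left h (abs_nonneg d)
    linarith [neg_abs_le (d * (a - b))]
  nlinarith

theorem penalizedLoss_entry_increment_ge (h : |b - a| ≤ lam) (c : Prop) [Decidable c] :
    (1 / 2) * d ^ 2 - 2 * lam * |d| ≤
      ((1 / 2) * (d + a - b) ^ 2 + lam * (if c then |d + a| else 0))
        - ((1 / 2) * (a - b) ^ 2 + lam * (if c then |a| else 0)) := by
  have hquad := half_sq_sub_le_half_sq_add_sub_sq (d := d) h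
  have hlam : 0 ≤ lam := (abs_nonneg _).trans h
  have hpen : -(lam * |d|) ≤ lam * (if c then |d + a| else 0) - lam * (if c then |a| else 0) := by
    split_ifs
    · have : |a| - |d + a| ≤ |d| := by
        simpa using abs_sub_abs_le_abs_sub a (d + a)
      nlinarith
    · nlinarith [abs_nonneg d]
  linarith

theorem penalizedLoss_entry_increment_ge_of_eq_zero (h : |b - a| ≤ lam) (ha : a = 0) :
    (1 / 2) * d ^ 2 ≤
      ((1 / 2) * (d + a - b) ^ 2 + lam * |d + a|) - ((1 / 2) * (a - b) ^ 2 + lam * |a|) := by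
  have hquad := half_sq_sub_le_half_sq_add_sub_sq (d := d) h
  subst ha
  simp only [add_zero, abs_zero, mul_zero] at hquad ⊢
  linarith

end EntryIncrement

theorem penalizedLoss_add_sub_ge {ι : Type*} [Fintype ι] [DecidableEq ι]
    {S0 B : Matrix ι ι ℝ} {S : Finset (ι × ι)} (hsupp : ∀ k l, S0 k l ≠ 0 → (k, l) ∈ S)
    (hdiag : ∀ k, (k, k) ∈ S) {lam : ℝ} (hmax : ∀ k l, |B k l - S0 k l| ≤ lam) (Δ : Matrix ι ι ℝ) :
    (1 / 2) * (∑ k, ∑ l, Δ k l ^ 2) - 2 * lam * ∑ x ∈ S, |Δ x.1 x.2| ≤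
      penalizedLoss lam B (Δ + S0) - penalizedLoss lam B S0 := by
  have hentry : ∀ k l, (1 / 2) * Δ k l ^ 2 - (if (k, l) ∈ S then 2 * lam * |Δ k l| else 0) ≤
      ((1 / 2) * (Δ k l + S0 k l - B k l) ^ 2 + lam * (if k ≠ l then |Δ k l + S0 k l| else 0))
        - ((1 / 2) * (S0 k l - B k l) ^ 2 + lam * (if k ≠ l then |S0 k l| else 0)) := by
    intro k l
    by_cases hmem : (k, l) ∈ S
    · rw [if_pos hmem]
      exact penalizedLoss_entry_increment_ge (hmax k l) _
    · have hzero : S0 k l = 0 := not_imp_comm.mp (hsupp k l) hmem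
      have hkl : k ≠ l := by
        rintro rfl
        exact hmem (hdiag k)
      rw [if_neg hmem, if_pos hkl, if_pos hkl, sub_zero]
      exact penalizedLoss_entry_increment_ge_of_eq_zero (hmax k l) hzero
  have hS : ∑ x ∈ S, |Δ x.1 x.2| = ∑ k, ∑ l, if (k, l) ∈ S then |Δ k l| else 0 := by
    rw [← Fintype.sum_prod_type' (fun k l ↦ if (k, l) ∈ S then |Δ k l| else 0), sum_ite_mem,
      univ_inter]
  calc (1 / 2) * (∑ k, ∑ l, Δ k l ^ 2) - 2 * lam * ∑ x ∈ S, |Δ x.1 x.2|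
      = ∑ k, ∑ l, ((1 / 2) * Δ k l ^ 2 - if (k, l) ∈ S then 2 * lam * |Δ k l| else 0) := by
        simp only [hS, mul_sum, mul_ite, mul_zero, sum_sub_distrib]
    _ ≤ ∑ k, ∑ l, (((1 / 2) * (Δ k l + S0 k l - B k l) ^ 2
          + lam * (if k ≠ l then |Δ k l + S0 k l| else 0))
        - ((1 / 2) * (S0 k l - B k l) ^ 2 + lam * (if k ≠ l then |S0 k l| else 0))) :=
        sum_le_sum fun k _ ↦ sum_le_sum fun l _ ↦ hentry k l
    _ = penalizedLoss lam B (Δ + S0) - penalizedLoss lam B S0 := by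
        simp only [penalizedLoss, Matrix.add_apply, mul_sum, sum_sub_distrib, sum_add_distrib]

theorem objective_positive_on_sphere_general
    (p s : ℕ) (hp : 0 < p) (hs : 0 < s)
    (lam δ : ℝ) (hlam : 0 < lam) (hδ : 0 < δ)
    (S0 B : Matrix (Fin p) (Fin p) ℝ)
    (hsparse : ∃ S : Finset (Fin p × Fin p), S.card ≤ p * s ∧
      ∀ k l, S0 k l ≠ 0 → (k, l) ∈ S)
    (hmax : ∀ k l, |B k l - S0 k l| ≤ lam)
    (hpsd : (S0 - δ • (1 : Matrix (Fin p) (Fin p) ℝ)).PosSemidef)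
    (F : Matrix (Fin p) (Fin p) ℝ → ℝ)
    (hF : ∀ Δ, F Δ =
      (1 / 2) * (∑ k, ∑ l, (Δ k l + S0 k l - B k l) ^ 2)
        + lam * (∑ k, ∑ l, if k ≠ l then |Δ k l + S0 k l| else 0)
        - ((1 / 2) * (∑ k, ∑ l, (S0 k l - B k l) ^ 2)
            + lam * (∑ k, ∑ l, if k ≠ l then |S0 k l| else 0))) :
    ∀ Δ : Matrix (Fin p) (Fin p) ℝ, Δ.IsSymm →
      Real.sqrt (∑ k, ∑ l, (Δ k l) ^ 2) = 5 * lam * Real.sqrt ((p : ℝ) * (s : ℝ)) →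
      ((5 / 2) * lam ^ 2 * ((p : ℝ) * (s : ℝ)) ≤ F Δ ∧
        0 < (5 / 2) * lam ^ 2 * ((p : ℝ) * (s : ℝ))) := by
  obtain ⟨S, hcard, hsupp⟩ := hsparse
  intro Δ _ hnorm
  have hdiag (k : Fin p) : (k, k) ∈ S :=
    hsupp k k (hδ.trans_le (hpsd.le_diag_of_sub_smul_one k)).ne'
  have hFΔ : F Δ = penalizedLoss lam B (Δ + S0) - penalizedLoss lam B S0 := hF Δ
  have hS : ∑ x ∈ S, |Δ x.1 x.2| ≤ √(p * s) * √(∑ k, ∑ l, Δ k l ^ 2) := by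
    refine (S.sum_abs_le_sqrt_card_mul_sqrt_sum_sq _).trans (mul_le_mul ?_ ?_ ?_ ?_)
    · exact Real.sqrt_le_sqrt (by exact_mod_cast hcard)
    · rw [← Fintype.sum_prod_type' fun k l ↦ Δ k l ^ 2]
      exact Real.sqrt_le_sqrt (sum_le_univ_sum_of_nonneg fun _ ↦ sq_nonneg _)
    all_goals positivity
  have hΔsq : √(∑ k, ∑ l, Δ k l ^ 2) ^ 2 = ∑ k, ∑ l, Δ k l ^ 2 := Real.sq_sqrt (by positivity)
  have hps : √(p * s : ℝ) ^ 2 = p * s := Real.sq_sqrt (by positivity)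
  refine ⟨?_, by positivity⟩
  rw [hnorm] at hS hΔsq
  nlinarith [penalizedLoss_add_sub_ge hsupp hdiag hmax Δ]

/-- Deterministic lower bound on the centered objective on the sphere of radius
5 λ sqrt(ps): F(Δ) ≥ (5/2) λ² p s > 0. -/
theorem objective_positive_on_sphere
    (p s : ℕ) (hp : 0 < p) (hs : 0 < s)
    (lam δ : ℝ) (hlam : 0 < lam) (hδ : 0 < δ)
    (S0 B : Matrix (Fin p) (Fin p) ℝ) (hS0 : S0.IsSymm) (hB : B.IsSymm)
    (hsparse : ∃ S : Finset (Fin p × Fin p), S.card ≤ p * s ∧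
      ∀ k l, S0 k l ≠ 0 → (k, l) ∈ S)
    (hmax : ∀ k l, |B k l - S0 k l| ≤ lam)
    (hpsd : (S0 - δ • (1 : Matrix (Fin p) (Fin p) ℝ)).PosSemidef)
    (F : Matrix (Fin p) (Fin p) ℝ → ℝ)
    (hF : ∀ Δ, F Δ =
      (1 / 2) * (∑ k, ∑ l, (Δ k l + S0 k l - B k l) ^ 2)
        + lam * (∑ k, ∑ l, if k ≠ l then |Δ k l + S0 k l| else 0)
        - ((1 / 2) * (∑ k, ∑ l, (S0 k l - B k l) ^ 2)
            + lam * (∑ k, ∑ l, if k ≠ l then |S0 k l| else 0))) :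
    ∀ Δ : Matrix (Fin p) (Fin p) ℝ, Δ.IsSymm →
      Real.sqrt (∑ k, ∑ l, (Δ k l) ^ 2) = 5 * lam * Real.sqrt ((p : ℝ) * (s : ℝ)) →
      ((5 / 2) * lam ^ 2 * ((p : ℝ) * (s : ℝ)) ≤ F Δ ∧
        0 < (5 / 2) * lam ^ 2 * ((p : ℝ) * (s : ℝ))) :=
  objective_positive_on_sphere_general p s hp hs lam δ hlam hδ S0 B hsparse hmax hpsd F hF
end

section
/- Let F : 𝒦 → ℝ be a convex function on a convex set 𝒦 of symmetric matrices containing 0, with F(0) = 0, and suppose F(Δ) > 0 for all Δ ∈ 𝒦 with ‖Δ‖_F = r. Then any minimizer Δ̂ of F over 𝒦 satisfies ‖Δ̂‖_F < r. -/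
/-!
If the minimizer `x̂` had `N x̂ ≥ r`, the point `t • x̂` with `t = r / N x̂ ∈ (0, 1]` would lie on
the sphere `N = r`, on the segment from `0` to `x̂`. Convexity and `F 0 = 0` give
`F (t • x̂) ≤ t * F x̂ ≤ 0`, the last step because `F x̂ ≤ F 0`; this contradicts `F > 0` there.
-/

open Finset

section

variable {E : Type*} [AddCommGroup E] [Module ℝ E] {K : Set E} {F : E → ℝ}

theorem ConvexOn.map_smul_le_of_map_zero (hF : ConvexOn ℝ K F) (h0 : 0 ∈ K) (hF0 : F 0 = 0)
    {x : E} (hx : x ∈ K) {t : ℝ} (ht0 : 0 ≤ t) (ht1 : t ≤ 1) :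
    F (t • x) ≤ t * F x := by
  have h := hF.2 h0 hx (sub_nonneg.2 ht1) ht0 (sub_add_cancel 1 t)
  simpa only [smul_zero, zero_add, hF0, smul_eq_mul, mul_zero] using h

theorem IsMinOn.map_smul_nonpos (hF : ConvexOn ℝ K F) (h0 : 0 ∈ K) (hF0 : F 0 = 0)
    {x : E} (hx : x ∈ K) (hmin : IsMinOn F K x) {t : ℝ} (ht0 : 0 ≤ t) (ht1 : t ≤ 1) :
    F (t • x) ≤ 0 := by
  have hFx : F x ≤ 0 := hF0 ▸ hmin h0
  calc F (t • x) ≤ t * F x := hF.map_smul_le_of_map_zero h0 hF0 hx ht0 ht1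
    _ ≤ 0 := mul_nonpos_of_nonneg_of_nonpos ht0 hFx

theorem IsMinOn.lt_of_pos_on_level (hK : Convex ℝ K) (h0 : 0 ∈ K) (hF : ConvexOn ℝ K F)
    (hF0 : F 0 = 0) {N : E → ℝ} (hN : ∀ (t : ℝ) (x : E), 0 ≤ t → N (t • x) = t * N x)
    {r : ℝ} (hr : 0 < r) (hpos : ∀ y ∈ K, N y = r → 0 < F y)
    {x : E} (hx : x ∈ K) (hmin : IsMinOn F K x) :
    N x < r := by
  by_contra! hrx
  have hNx : 0 < N x := hr.trans_le hrx
  set t := r / N x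
  have ht0 : 0 ≤ t := (div_pos hr hNx).le
  have ht1 : t ≤ 1 := (div_le_one hNx).2 hrx
  have hmem : t • x ∈ K := hK.smul_mem_of_zero_mem h0 hx ⟨ht0, ht1⟩
  have hlevel : N (t • x) = r := by rw [hN t x ht0, div_mul_cancel₀ r hNx.ne']
  exact (hpos _ hmem hlevel).not_ge (hmin.map_smul_nonpos hF h0 hF0 hx ht0 ht1)

end

theorem Matrix.sqrt_sum_sq_smul {m n : Type*} [Fintype m] [Fintype n] {t : ℝ} (ht : 0 ≤ t)
    (A : Matrix m n ℝ) :
    Real.sqrt (∑ k, ∑ l, ((t • A) k l) ^ 2) = t * Real.sqrt (∑ k, ∑ l, (A k l) ^ 2) := by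
  simp only [Matrix.smul_apply, smul_eq_mul, mul_pow, ← Finset.mul_sum]
  rw [Real.sqrt_mul (sq_nonneg t), Real.sqrt_sq ht]

theorem minimizer_inside_sphere_general
    (p : ℕ) (r : ℝ) (hr : 0 < r)
    (K : Set (Matrix (Fin p) (Fin p) ℝ))
    (hK : Convex ℝ K) (h0 : (0 : Matrix (Fin p) (Fin p) ℝ) ∈ K)
    (F : Matrix (Fin p) (Fin p) ℝ → ℝ) (hF : ConvexOn ℝ K F) (hF0 : F 0 = 0)
    (hpos : ∀ Δ ∈ K, Real.sqrt (∑ k, ∑ l, (Δ k l) ^ 2) = r → 0 < F Δ)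
    (Dhat : Matrix (Fin p) (Fin p) ℝ) (hDK : Dhat ∈ K)
    (hmin : ∀ Δ ∈ K, F Dhat ≤ F Δ) :
    Real.sqrt (∑ k, ∑ l, (Dhat k l) ^ 2) < r :=
  IsMinOn.lt_of_pos_on_level hK h0 hF hF0 (fun _ A ht => Matrix.sqrt_sum_sq_smul ht A) hr hpos
    hDK hmin

/-- If a convex function on a convex set of symmetric matrices containing 0 satisfies
F(0) = 0 and F > 0 on the sphere of radius r, then any minimizer lies strictly inside. -/
theorem minimizer_inside_sphere
    (p : ℕ) (r : ℝ) (hr : 0 < r)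
    (K : Set (Matrix (Fin p) (Fin p) ℝ)) (hKsymm : ∀ A ∈ K, A.IsSymm)
    (hK : Convex ℝ K) (h0 : (0 : Matrix (Fin p) (Fin p) ℝ) ∈ K)
    (F : Matrix (Fin p) (Fin p) ℝ → ℝ) (hF : ConvexOn ℝ K F) (hF0 : F 0 = 0)
    (hpos : ∀ Δ ∈ K, Real.sqrt (∑ k, ∑ l, (Δ k l) ^ 2) = r → 0 < F Δ)
    (Dhat : Matrix (Fin p) (Fin p) ℝ) (hDK : Dhat ∈ K)
    (hmin : ∀ Δ ∈ K, F Dhat ≤ F Δ) :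
    Real.sqrt (∑ k, ∑ l, (Dhat k l) ^ 2) < r :=
  minimizer_inside_sphere_general p r hr K hK h0 F hF hF0 hpos Dhat hDK hmin
end

section
/- Let B, Σ⁰ be symmetric p×p matrices with Σ⁰ ⪰ δ I_p, Σ⁰ having at most ps nonzero entries, and max_{k,ℓ}|(B - Σ⁰)_{kℓ}| ≤ λ. Then any minimizer Σ̂ of (1/2)‖Σ - B‖_F² + λ|Σ|_1 over {Σ symmetric : Σ ⪰ δ I_p} satisfies ‖Σ̂ - Σ⁰‖_F ≤ 5λ(ps)^{1/2}. -/
/-!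
Write `Δ = Σ̂ - Σ⁰`. Comparing the objective at `Σ̂` with its value at the feasible `Σ⁰` gives the
basic inequality `½‖Δ‖² ≤ ⟨Δ, B - Σ⁰⟩ + λ(|Σ⁰|₁ - |Σ̂|₁)`. Because `|B - Σ⁰| ≤ λ` entrywise, an
off-diagonal entry outside the support `S` of `Σ⁰` contributes at most `0` to the right side (the
penalty absorbs the noise), and any other entry at most `2λ|Δₖₗ|`; the unpenalized diagonal lies
in `S` since `Σ⁰ₖₖ ≥ δ > 0`. Cauchy–Schwarz over `S` then gives `½‖Δ‖² ≤ 2λ√|S| ‖Δ‖`, so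
`‖Δ‖ ≤ 4λ√(ps)`.
-/

open Finset

namespace PenalizedCovariance

lemma le_diag_of_posSemidef_sub_smul_one {n : Type*} [DecidableEq n] {δ : ℝ}
    {M : Matrix n n ℝ} (h : (M - δ • 1).PosSemidef) (k : n) : δ ≤ M k k := by
  simpa [Matrix.sub_apply, Matrix.one_apply] using h.diag_nonneg (i := k)

variable {n : Type*} [Fintype n]

def frobSq (M : Matrix n n ℝ) : ℝ := ∑ k, ∑ l, M k l ^ 2

def frobInner (M N : Matrix n n ℝ) : ℝ := ∑ k, ∑ l, M k l * N k l

def offDiagL1 [DecidableEq n] (M : Matrix n n ℝ) : ℝ :=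
  ∑ k, ∑ l, if k ≠ l then |M k l| else 0

noncomputable def penalizedObjective [DecidableEq n] (lam : ℝ) (B M : Matrix n n ℝ) : ℝ :=
  1 / 2 * frobSq (M - B) + lam * offDiagL1 M

lemma frobSq_nonneg (M : Matrix n n ℝ) : 0 ≤ frobSq M :=
  sum_nonneg fun _ _ ↦ sum_nonneg fun _ _ ↦ sq_nonneg _

lemma frobSq_sub_eq (X Y B : Matrix n n ℝ) :
    frobSq (X - B) = frobSq (X - Y) - 2 * frobInner (X - Y) (B - Y) + frobSq (Y - B) := by
  simp only [frobSq, frobInner, Matrix.sub_apply, mul_sum, ← sum_sub_distrib,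
    ← sum_add_distrib]
  exact sum_congr rfl fun k _ ↦ sum_congr rfl fun l _ ↦ by ring

lemma half_frobSq_sub_le_of_penalizedObjective_le [DecidableEq n] {lam : ℝ}
    {B X Y : Matrix n n ℝ} (h : penalizedObjective lam B X ≤ penalizedObjective lam B Y) :
    1 / 2 * frobSq (X - Y) ≤ frobInner (X - Y) (B - Y) + lam * (offDiagL1 Y - offDiagL1 X) := by
  rw [penalizedObjective, penalizedObjective, frobSq_sub_eq X Y B] at h
  linarith

lemma mul_le_mul_abs_of_abs_le {x y lam : ℝ} (h : |y| ≤ lam) : x * y ≤ lam * |x| :=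
  calc x * y ≤ |x| * |y| := (le_abs_self _).trans (abs_mul x y).le
    _ ≤ |x| * lam := mul_le_mul_of_nonneg_left h (abs_nonneg x)
    _ = lam * |x| := mul_comm _ _

lemma mul_add_abs_sub_abs_le {a a₀ b lam : ℝ} (hb : |b - a₀| ≤ lam) :
    (a - a₀) * (b - a₀) + lam * (|a₀| - |a|) ≤ 2 * lam * |a - a₀| := by
  have hinner := mul_le_mul_abs_of_abs_le (x := a - a₀) hb
  have hreverse : |a₀| - |a| ≤ |a - a₀| := abs_sub_comm a₀ a ▸ abs_sub_abs_le_abs_sub a₀ a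
  have hlam : 0 ≤ lam := (abs_nonneg _).trans hb
  nlinarith

lemma frobInner_add_offDiagL1_sub_le [DecidableEq n] {lam : ℝ} {B X Y : Matrix n n ℝ}
    {S : Finset (n × n)} (hsupp : ∀ k l, Y k l ≠ 0 → (k, l) ∈ S) (hdiag : ∀ k, (k, k) ∈ S)
    (hmax : ∀ k l, |B k l - Y k l| ≤ lam) :
    frobInner (X - Y) (B - Y) + lam * (offDiagL1 Y - offDiagL1 X)
      ≤ 2 * lam * ∑ q ∈ S, |X q.1 q.2 - Y q.1 q.2| := by
  rw [← univ_inter S, ← sum_ite_mem, Fintype.sum_prod_type, mul_sum]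
  simp only [frobInner, offDiagL1, Matrix.sub_apply, mul_sum, ← sum_sub_distrib,
    ← sum_add_distrib]
  refine sum_le_sum fun k _ ↦ sum_le_sum fun l _ ↦ ?_
  have hinner := mul_le_mul_abs_of_abs_le (x := X k l - Y k l) (hmax k l)
  have hlam : 0 ≤ lam := (abs_nonneg _).trans (hmax k l)
  by_cases hkl : k = l
  · subst hkl
    simp only [ne_eq, not_true_eq_false, if_false, if_pos (hdiag k)]
    nlinarith [abs_nonneg (X k k - Y k k)]
  by_cases hkS : (k, l) ∈ S
  · simpa only [ne_eq, hkl, not_false_eq_true, if_true, if_pos hkS, mul_sub]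
      using mul_add_abs_sub_abs_le (a := X k l) (hmax k l)
  · have hY : Y k l = 0 := not_not.mp fun h ↦ hkS (hsupp k l h)
    simp only [ne_eq, hkl, not_false_eq_true, if_true, if_neg hkS, hY, sub_zero, abs_zero]
      at hinner ⊢
    linarith

lemma sum_abs_le_sqrt_card_mul_sqrt_sum_sq {α : Type*} [Fintype α] (S : Finset α) (v : α → ℝ) :
    ∑ q ∈ S, |v q| ≤ √(#S) * √(∑ q, v q ^ 2) := by
  calc ∑ q ∈ S, |v q| = ∑ q ∈ S, 1 * |v q| := by simp only [one_mul]
    _ ≤ √(∑ q ∈ S, 1 ^ 2) * √(∑ q ∈ S, |v q| ^ 2) := Real.sum_mul_le_sqrt_mul_sqrt _ _ _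
    _ ≤ √(#S) * √(∑ q, v q ^ 2) := by
      simp only [one_pow, sum_const, nsmul_eq_mul, mul_one, sq_abs]
      exact mul_le_mul_of_nonneg_left (Real.sqrt_le_sqrt <| sum_le_sum_of_subset_of_nonneg
        (subset_univ S) fun _ _ _ ↦ sq_nonneg _) (Real.sqrt_nonneg _)

lemma le_of_sq_le_mul {a c : ℝ} (hc : 0 ≤ c) (h : a ^ 2 ≤ c * a) : a ≤ c := by
  nlinarith

theorem sqrt_frobSq_sub_le_of_penalizedObjective_le [DecidableEq n] {lam : ℝ} (hlam : 0 ≤ lam)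
    {B X Y : Matrix n n ℝ} {S : Finset (n × n)} (hsupp : ∀ k l, Y k l ≠ 0 → (k, l) ∈ S)
    (hdiag : ∀ k, (k, k) ∈ S) (hmax : ∀ k l, |B k l - Y k l| ≤ lam)
    (hobj : penalizedObjective lam B X ≤ penalizedObjective lam B Y) :
    √(frobSq (X - Y)) ≤ 4 * lam * √(#S) := by
  have hbasic := half_frobSq_sub_le_of_penalizedObjective_le hobj
  have hexcess := frobInner_add_offDiagL1_sub_le (X := X) hsupp hdiag hmax
  have hCS := sum_abs_le_sqrt_card_mul_sqrt_sum_sq S fun q ↦ X q.1 q.2 - Y q.1 q.2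
  simp only [Fintype.sum_prod_type] at hCS
  refine le_of_sq_le_mul (by positivity) ?_
  rw [Real.sq_sqrt (frobSq_nonneg _)]
  calc frobSq (X - Y) ≤ 4 * lam * ∑ q ∈ S, |X q.1 q.2 - Y q.1 q.2| := by linarith
    _ ≤ 4 * lam * √(#S) * √(frobSq (X - Y)) := by
      rw [mul_assoc _ √(#S : ℝ)]
      exact mul_le_mul_of_nonneg_left hCS (by positivity)

end PenalizedCovariance

open PenalizedCovariance

theorem penalized_minimizer_error_bound_general
    (p s : ℕ) (lam δ : ℝ) (hlam : 0 < lam) (hδ : 0 < δ)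
    (B S0 : Matrix (Fin p) (Fin p) ℝ) (hS0 : S0.IsSymm)
    (hpsd : (S0 - δ • (1 : Matrix (Fin p) (Fin p) ℝ)).PosSemidef)
    (hsparse : ∃ S : Finset (Fin p × Fin p), S.card ≤ p * s ∧
      ∀ k l, S0 k l ≠ 0 → (k, l) ∈ S)
    (hmax : ∀ k l, |B k l - S0 k l| ≤ lam)
    (Shat : Matrix (Fin p) (Fin p) ℝ)
    (hmin : ∀ S' : Matrix (Fin p) (Fin p) ℝ, S'.IsSymm →
      (S' - δ • (1 : Matrix (Fin p) (Fin p) ℝ)).PosSemidef →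
      (1 / 2) * (∑ k, ∑ l, (Shat k l - B k l) ^ 2)
          + lam * (∑ k, ∑ l, if k ≠ l then |Shat k l| else 0)
        ≤ (1 / 2) * (∑ k, ∑ l, (S' k l - B k l) ^ 2)
          + lam * (∑ k, ∑ l, if k ≠ l then |S' k l| else 0)) :
    Real.sqrt (∑ k, ∑ l, (Shat k l - S0 k l) ^ 2)
      ≤ 5 * lam * Real.sqrt ((p : ℝ) * (s : ℝ)) := by
  obtain ⟨S, hcard, hsupp⟩ := hsparse
  have hdiag : ∀ k, (k, k) ∈ S := fun k ↦
    hsupp k k (hδ.trans_le (le_diag_of_posSemidef_sub_smul_one hpsd k)).ne'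
  have hcard' : √(#S : ℝ) ≤ √((p : ℝ) * s) := Real.sqrt_le_sqrt (by exact_mod_cast hcard)
  calc √(frobSq (Shat - S0)) ≤ 4 * lam * √(#S : ℝ) :=
        sqrt_frobSq_sub_le_of_penalizedObjective_le hlam.le hsupp hdiag hmax (hmin S0 hS0 hpsd)
    _ ≤ 5 * lam * √((p : ℝ) * s) := by gcongr; norm_num

/-- Deterministic version of the estimation error bound: any minimizer of the penalized
objective over the positive definite cone is within 5 λ sqrt(ps) of the truth in
Frobenius norm. -/
theorem penalized_minimizer_error_bound
    (p s : ℕ) (lam δ : ℝ) (hlam : 0 < lam) (hδ : 0 < δ)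
    (B S0 : Matrix (Fin p) (Fin p) ℝ) (hB : B.IsSymm) (hS0 : S0.IsSymm)
    (hpsd : (S0 - δ • (1 : Matrix (Fin p) (Fin p) ℝ)).PosSemidef)
    (hsparse : ∃ S : Finset (Fin p × Fin p), S.card ≤ p * s ∧
      ∀ k l, S0 k l ≠ 0 → (k, l) ∈ S)
    (hmax : ∀ k l, |B k l - S0 k l| ≤ lam)
    (Shat : Matrix (Fin p) (Fin p) ℝ) (hhatsymm : Shat.IsSymm)
    (hhatpsd : (Shat - δ • (1 : Matrix (Fin p) (Fin p) ℝ)).PosSemidef)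
    (hmin : ∀ S' : Matrix (Fin p) (Fin p) ℝ, S'.IsSymm →
      (S' - δ • (1 : Matrix (Fin p) (Fin p) ℝ)).PosSemidef →
      (1 / 2) * (∑ k, ∑ l, (Shat k l - B k l) ^ 2)
          + lam * (∑ k, ∑ l, if k ≠ l then |Shat k l| else 0)
        ≤ (1 / 2) * (∑ k, ∑ l, (S' k l - B k l) ^ 2)
          + lam * (∑ k, ∑ l, if k ≠ l then |S' k l| else 0)) :
    Real.sqrt (∑ k, ∑ l, (Shat k l - S0 k l) ^ 2)
      ≤ 5 * lam * Real.sqrt ((p : ℝ) * (s : ℝ)) :=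
  penalized_minimizer_error_bound_general p s lam δ hlam hδ B S0 hS0 hpsd hsparse hmax Shat hmin
end
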